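/- Let d ≥ 2, m ≥ 1, and Q₀,…,Q_m ∈ ℂ[X₁,…,X_{d−1}] with Q_m = 1. Then for every open Y ⊆ ℝ^{d−1}, every l ∈ ℕ₀ and every f ∈ C^∞(Y, ℂ): 𝒞_{m−1+l}(f) = Σ_{s ∈ ℕ₀^m, σ(s) = l} (−1)^{|s|} (|s|!/(s₁!⋯s_m!)) (∏_{k=1}^m Q_{m−k}(D)^{s_k}) f, where σ(s) = Σ_{j=1}^m j s_j and |s| = s₁ + … + s_m. -/

import Mathlib

open Filter MvPolynomial

noncomputable section

/-- Partial derivative in coordinate direction `i`. -/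
noncomputable def pd {d : ℕ} (i : Fin d) (f : EuclideanSpace ℝ (Fin d) → ℂ) :
    EuclideanSpace ℝ (Fin d) → ℂ :=
  fun x => fderiv ℝ f x (EuclideanSpace.single i 1)

/-- Iterated partial derivative `∂^α`. -/
noncomputable def pdPow {d : ℕ} (α : Fin d → ℕ) (f : EuclideanSpace ℝ (Fin d) → ℂ) :
    EuclideanSpace ℝ (Fin d) → ℂ :=
  (((List.finRange d).map fun i => (pd i)^[α i]).foldr (· ∘ ·) id) f

/-- The constant-coefficient differential operator
`P(D)f = Σ_{α} a_α (−i)^{|α|} ∂^α f`. -/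
noncomputable def PD {d : ℕ} (P : MvPolynomial (Fin d) ℂ) (f : EuclideanSpace ℝ (Fin d) → ℂ) :
    EuclideanSpace ℝ (Fin d) → ℂ :=
  fun x => ∑ α ∈ P.support, P.coeff α * (-Complex.I) ^ (α.sum fun _ e => e) * pdPow (⇑α) f x

/-- `P̌(ξ) = P(−ξ)`. -/
noncomputable def checkPoly {d : ℕ} (P : MvPolynomial (Fin d) ℂ) : MvPolynomial (Fin d) ℂ :=
  MvPolynomial.aeval (fun i => -MvPolynomial.X i) P

/-- Value of the principal part `P_m(x) = Σ_{|α| = deg P} a_α x^α` at a real point. -/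
noncomputable def principalValue {d : ℕ} (P : MvPolynomial (Fin d) ℂ)
    (x : EuclideanSpace ℝ (Fin d)) : ℂ :=
  ∑ α ∈ P.support.filter fun α => (α.sum fun _ e => e) = P.totalDegree,
    P.coeff α * ∏ i, (x i : ℂ) ^ α i

/-- Distance between two sets, valued in `[0,∞]` (so `= ∞` if one of them is empty). -/
noncomputable def setEDist {d : ℕ} (A B : Set (EuclideanSpace ℝ (Fin d))) : ENNReal :=
  ⨅ x ∈ A, EMetric.infEdist x B

/-- `X` is `P`-convex for supports. -/
def PConvexSupp {d : ℕ} (P : MvPolynomial (Fin d) ℂ) (X : Set (EuclideanSpace ℝ (Fin d))) :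
    Prop :=
  ∀ φ : EuclideanSpace ℝ (Fin d) → ℂ, ContDiff ℝ (⊤ : ℕ∞) φ → HasCompactSupport φ →
    tsupport φ ⊆ X →
    setEDist (tsupport φ) Xᶜ = setEDist (tsupport (PD (checkPoly P) φ)) Xᶜ

/-- `u ∈ ℰ_P(X)`: `u` is smooth on `X` and satisfies `P(D)u = 0` on `X`. -/
def SolOn {d : ℕ} (P : MvPolynomial (Fin d) ℂ) (X : Set (EuclideanSpace ℝ (Fin d)))
    (u : EuclideanSpace ℝ (Fin d) → ℂ) : Prop :=
  ContDiffOn ℝ (⊤ : ℕ∞) u X ∧ ∀ x ∈ X, PD P u x = 0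

/-- `(X₁, X₂)` is a `P`-Runge pair. -/
def RungePair {d : ℕ} (P : MvPolynomial (Fin d) ℂ)
    (X₁ X₂ : Set (EuclideanSpace ℝ (Fin d))) : Prop :=
  ∀ u, SolOn P X₁ u → ∀ K : Set (EuclideanSpace ℝ (Fin d)), IsCompact K → K ⊆ X₁ →
    ∀ l : ℕ, ∀ ε : ℝ, 0 < ε →
      ∃ v, SolOn P X₂ v ∧ ∀ x ∈ K, ∀ α : Fin d → ℕ, (∑ i, α i) ≤ l →
        ‖pdPow α u x - pdPow α v x‖ < ε

/-- `X₂` contains a compact connected component of `(ℝ^d ∖ X₁) ∩ {x : x_i = c}`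
for some `c ∈ ℝ`. -/
def TrappedComponent {d : ℕ} (X₁ X₂ : Set (EuclideanSpace ℝ (Fin d))) (i : Fin d) : Prop :=
  ∃ c : ℝ, ∃ x ∈ X₁ᶜ ∩ {y : EuclideanSpace ℝ (Fin d) | y i = c},
    IsCompact (connectedComponentIn (X₁ᶜ ∩ {y : EuclideanSpace ℝ (Fin d) | y i = c}) x) ∧
    connectedComponentIn (X₁ᶜ ∩ {y : EuclideanSpace ℝ (Fin d) | y i = c}) x ⊆ X₂
/-- The recursively defined operators `𝒞_l`. -/
noncomputable def CC {n : ℕ} (m : ℕ) (Q : ℕ → MvPolynomial (Fin n) ℂ) (l : ℕ)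
    (f : EuclideanSpace ℝ (Fin n) → ℂ) : EuclideanSpace ℝ (Fin n) → ℂ :=
  if l + 1 < m then 0
  else if l + 1 = m then f
  else -∑ k : Fin m, PD (Q k.1) (CC m Q (k.1 + l - m) f)
termination_by l
decreasing_by
  simp_wf
  have := k.2
  omega

/-!
Formally `𝒞_{m-1+l} = A_l(D)` with `A_0 = 1` and `A_l = -Σ_{j=1}^{min(m,l)} Q_{m-j} A_{l-j}`, i.e.
`Σ_l A_l t^l = (1 + Σ_j Q_{m-j} t^j)⁻¹`. The explicit sum satisfies the same recursion: writing
`s = t + e_j` raises `σ` by `j`, and the multinomial coefficients obey the Pascal rule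
`(|s| choose s) = Σ_{j, s_j > 0} (|s| - 1 choose s - e_j)`. Applying `Q_{m-j}(D)` to the
monomial `∏ₖ Q_{m-k}(D)^{t_k} f` yields the monomial for `t + e_j` because the operators
`Q_k(D)` commute; by Schwarz's theorem this holds for functions smooth on `Y` and at points of
`Y` only, so the operator identities are equalities on `Y`.
-/

open Finset Set
open scoped Nat

theorem sub_single_add_single {ι : Type*} [DecidableEq ι] {s : ι → ℕ} {j : ι}
    (hj : 0 < s j) : s - Pi.single j 1 + Pi.single j 1 = s := by
  ext i
  rcases eq_or_ne i j with rfl | hi <;> simp [*]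
  omega

theorem sum_sub_single_add_one {ι : Type*} [Fintype ι] [DecidableEq ι] {s : ι → ℕ} {j : ι}
    (hj : 0 < s j) : ∑ i, (s - Pi.single j 1 : ι → ℕ) i + 1 = ∑ i, s i := by
  conv_rhs => rw [← sub_single_add_single hj]
  simp [sum_add_distrib]

namespace Nat

variable {ι : Type*} [Fintype ι] [DecidableEq ι]

theorem multinomial_add_single_mul (t : ι → ℕ) (j : ι) :
    multinomial univ (t + Pi.single j 1) * (t j + 1) = multinomial univ t * (∑ i, t i + 1) := by
  have hsum : ∑ i, (t + Pi.single j 1 : ι → ℕ) i = ∑ i, t i + 1 := by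
    simp [sum_add_distrib]
  have hprod : ∏ i, ((t + Pi.single j 1 : ι → ℕ) i)! = (t j + 1) * ∏ i, (t i)! := by
    rw [← mul_prod_erase _ _ (mem_univ j), ← mul_prod_erase _ _ (mem_univ j),
      prod_congr rfl fun i hi => by
        rw [Pi.add_apply, Pi.single_eq_of_ne (ne_of_mem_erase hi), add_zero]]
    simp [factorial_succ, mul_assoc]
  have h := multinomial_spec univ (t + Pi.single j 1)
  rw [hsum, hprod, factorial_succ, ← multinomial_spec univ t, mul_assoc] at h
  apply Nat.eq_of_mul_eq_mul_left (prod_pos fun i _ => factorial_pos (t i))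
  linarith

theorem multinomial_eq_sum_sub_single {s : ι → ℕ} (hs : s ≠ 0) :
    multinomial univ s = ∑ j with 0 < s j, multinomial univ (s - Pi.single j 1) := by
  have hpos : 0 < ∑ i, s i :=
    Nat.pos_of_ne_zero fun h => hs (funext fun i => sum_eq_zero_iff.1 h i (mem_univ i))
  have key (j : ι) (hj : 0 < s j) :
      multinomial univ s * s j = multinomial univ (s - Pi.single j 1) * ∑ i, s i := by
    have hsj : (s - Pi.single j 1 : ι → ℕ) j + 1 = s j := by simp; omega
    have h := multinomial_add_single_mul (s - Pi.single j 1) j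
    rwa [sub_single_add_single hj, hsj, sum_sub_single_add_one hj] at h
  apply Nat.eq_of_mul_eq_mul_right hpos
  calc multinomial univ s * ∑ i, s i = ∑ j with 0 < s j, multinomial univ s * s j := by
        rw [← mul_sum, sum_filter_of_ne fun j _ h => Nat.pos_of_ne_zero h]
    _ = _ := by rw [sum_mul]; exact sum_congr rfl fun j hj => key j (mem_filter.1 hj).2

end Nat

def signedMultinomial {ι : Type*} [Fintype ι] (s : ι → ℕ) : ℤ :=
  (-1) ^ (∑ i, s i) * Nat.multinomial univ s

theorem sum_signedMultinomial_sub_single {ι : Type*} [Fintype ι] [DecidableEq ι] {s : ι → ℕ}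
    (hs : s ≠ 0) :
    ∑ j with 0 < s j, signedMultinomial (s - Pi.single j 1) = -signedMultinomial s := by
  have hsign (j : ι) (hj : 0 < s j) : signedMultinomial (s - Pi.single j 1) =
      -(-1) ^ (∑ i, s i) * Nat.multinomial univ (s - Pi.single j 1) := by
    rw [signedMultinomial, ← sum_sub_single_add_one hj, pow_succ]
    ring
  rw [sum_congr rfl fun j hj => hsign j (mem_filter.1 hj).2, ← mul_sum, ← Nat.cast_sum,
    ← Nat.multinomial_eq_sum_sub_single hs, signedMultinomial, neg_mul]

/-- `s j` is the multiplicity of the part `j + 1`. -/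
def partitionMultiplicities (m l : ℕ) : Finset (Fin m → ℕ) :=
  {s ∈ Fintype.piFinset fun _ => range (l + 1) | ∑ j : Fin m, (j.1 + 1) * s j = l}

section partitionMultiplicities

variable {m l : ℕ}

theorem mem_partitionMultiplicities {s : Fin m → ℕ} :
    s ∈ partitionMultiplicities m l ↔ ∑ j : Fin m, (j.1 + 1) * s j = l := by
  refine ⟨fun h => (mem_filter.1 h).2,
    fun h => mem_filter.2 ⟨Fintype.mem_piFinset.2 fun i => mem_range.2 ?_, h⟩⟩
  have := h ▸ single_le_sum (f := fun j : Fin m => (j.1 + 1) * s j) (fun _ _ => Nat.zero_le _)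
    (mem_univ i)
  nlinarith

theorem succ_le_of_mem_partitionMultiplicities {s : Fin m → ℕ}
    (hs : s ∈ partitionMultiplicities m l) {i : Fin m} (hi : 0 < s i) : i.1 + 1 ≤ l :=
  (Nat.le_mul_of_pos_right _ hi).trans <| mem_partitionMultiplicities.1 hs ▸
    single_le_sum (f := fun j : Fin m => (j.1 + 1) * s j) (fun _ _ => Nat.zero_le _) (mem_univ i)

theorem partitionMultiplicities_zero : partitionMultiplicities m 0 = {0} := by
  ext s
  rw [mem_partitionMultiplicities, Finset.mem_singleton, sum_eq_zero_iff, funext_iff]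
  simp

theorem sum_succ_mul_add_single (t : Fin m → ℕ) (j : Fin m) :
    ∑ i : Fin m, (i.1 + 1) * (t + Pi.single j 1 : Fin m → ℕ) i =
      ∑ i : Fin m, (i.1 + 1) * t i + (j.1 + 1) := by
  simp [mul_add, sum_add_distrib, Pi.single_apply]

theorem sum_partitionMultiplicities_add_single {M : Type*} [AddCommMonoid M]
    (G : (Fin m → ℕ) → M) {j : Fin m} (hj : j.1 + 1 ≤ l) :
    ∑ t ∈ partitionMultiplicities m (l - (j.1 + 1)), G (t + Pi.single j 1) =
      ∑ s ∈ partitionMultiplicities m l with 0 < s j, G s := by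
  refine sum_nbij' (· + Pi.single j 1) (· - Pi.single j 1) (fun t ht => ?_) (fun s hs => ?_)
    (fun t _ => add_tsub_cancel_right t _) (fun s hs => sub_single_add_single ?_) (fun _ _ => rfl)
  · rw [mem_partitionMultiplicities] at ht
    rw [mem_filter, mem_partitionMultiplicities, sum_succ_mul_add_single, ht]
    simp
    omega
  · rw [mem_filter, mem_partitionMultiplicities] at hs
    rw [mem_partitionMultiplicities]
    have := sum_succ_mul_add_single (s - Pi.single j 1) j
    rw [sub_single_add_single hs.2, hs.1] at this
    omega
  · exact (mem_filter.1 hs).2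

theorem sum_sum_signedMultinomial_sub_single {R : Type*} [Ring R] (F : (Fin m → ℕ) → R)
    (hl : 0 < l) :
    ∑ j : Fin m, ∑ s ∈ partitionMultiplicities m l with 0 < s j,
        (signedMultinomial (s - Pi.single j 1) : R) * F s =
      -∑ s ∈ partitionMultiplicities m l, (signedMultinomial s : R) * F s := by
  simp_rw [sum_filter]
  rw [sum_comm, ← sum_neg_distrib]
  refine sum_congr rfl fun s hs => ?_
  have hs0 : s ≠ 0 := by
    rintro rfl
    simp [mem_partitionMultiplicities] at hs
    omega
  rw [← sum_filter, ← sum_mul, ← Int.cast_sum, sum_signedMultinomial_sub_single hs0,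
    Int.cast_neg, neg_mul]

end partitionMultiplicities

def monomialOp {X ι : Type*} (T : ι → X → X) (L : List ι) (s : ι → ℕ) : X → X :=
  (L.map fun k => (T k)^[s k]).foldr (· ∘ ·) id

theorem monomialOp_congr {X ι : Type*} {T : ι → X → X} {L : List ι} {s s' : ι → ℕ}
    (h : ∀ k ∈ L, s k = s' k) : monomialOp T L s = monomialOp T L s' := by
  unfold monomialOp
  rw [List.map_congr_left fun k hk => by rw [h k hk]]

theorem monomialOp_zero {X ι : Type*} (T : ι → X → X) (L : List ι) :
    monomialOp T L 0 = id := by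
  induction L with
  | nil => rfl
  | cons k L ih => exact congrArg (id ∘ ·) ih

section Operators

variable {E : Type*} [NormedAddCommGroup E] [NormedSpace ℝ E] {Y : Set E}

structure IsLocalLinearOn (Y : Set E) (T : (E → ℂ) → E → ℂ) : Prop where
  contDiffOn : ∀ {f}, ContDiffOn ℝ (⊤ : ℕ∞) f Y → ContDiffOn ℝ (⊤ : ℕ∞) (T f) Y
  congr : ∀ {f g}, EqOn f g Y → EqOn (T f) (T g) Y
  map_add : ∀ {f g}, ContDiffOn ℝ (⊤ : ℕ∞) f Y → ContDiffOn ℝ (⊤ : ℕ∞) g Y →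
    EqOn (T (f + g)) (T f + T g) Y
  map_smul : ∀ (c : ℂ) {f}, ContDiffOn ℝ (⊤ : ℕ∞) f Y →
    EqOn (T (c • f)) (c • T f) Y

def CommOn (Y : Set E) (T U : (E → ℂ) → E → ℂ) : Prop :=
  ∀ f, ContDiffOn ℝ (⊤ : ℕ∞) f Y → EqOn (T (U f)) (U (T f)) Y

namespace IsLocalLinearOn

variable {T U : (E → ℂ) → E → ℂ}

theorem id : IsLocalLinearOn Y id :=
  ⟨fun hf => hf, fun h => h, fun _ _ => eqOn_refl _ _, fun _ _ _ => eqOn_refl _ _⟩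

theorem comp (hT : IsLocalLinearOn Y T) (hU : IsLocalLinearOn Y U) :
    IsLocalLinearOn Y (T ∘ U) where
  contDiffOn hf := hT.contDiffOn (hU.contDiffOn hf)
  congr h := hT.congr (hU.congr h)
  map_add hf hg := (hT.congr (hU.map_add hf hg)).trans
    (hT.map_add (hU.contDiffOn hf) (hU.contDiffOn hg))
  map_smul c _ hf := (hT.congr (hU.map_smul c hf)).trans (hT.map_smul c (hU.contDiffOn hf))

theorem iterate (hT : IsLocalLinearOn Y T) (a : ℕ) : IsLocalLinearOn Y T^[a] := by
  induction a with
  | zero => exact id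
  | succ a ih => exact ih.comp hT

theorem monomialOp {ι : Type*} {T : ι → (E → ℂ) → E → ℂ}
    (hT : ∀ k, IsLocalLinearOn Y (T k)) (L : List ι) (s : ι → ℕ) :
    IsLocalLinearOn Y (monomialOp T L s) := by
  induction L with
  | nil => exact id
  | cons k L ih => exact ((hT k).iterate (s k)).comp ih

theorem map_zero (hT : IsLocalLinearOn Y T) : EqOn (T 0) 0 Y := by
  have h := hT.map_smul 0 (f := 0) contDiffOn_const
  rwa [zero_smul, zero_smul] at h

theorem map_linComb (hT : IsLocalLinearOn Y T) {ι : Type*} (s : Finset ι) (c : ι → ℂ)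
    {g : ι → E → ℂ} (hg : ∀ i ∈ s, ContDiffOn ℝ (⊤ : ℕ∞) (g i) Y) :
    EqOn (T fun x => ∑ i ∈ s, c i * g i x) (fun x => ∑ i ∈ s, c i * T (g i) x) Y := by
  classical
  induction s using Finset.induction with
  | empty => exact hT.map_zero
  | insert a s ha ih =>
    simp only [sum_insert ha]
    have hga := hg a (mem_insert_self a s)
    have hs : ContDiffOn ℝ (⊤ : ℕ∞) (fun x => ∑ i ∈ s, c i * g i x) Y :=
      ContDiffOn.sum fun i hi => contDiffOn_const.mul (hg i (mem_insert_of_mem hi))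
    intro x hx
    rw [show (fun x => c a * g a x + ∑ i ∈ s, c i * g i x) =
        c a • g a + fun x => ∑ i ∈ s, c i * g i x from rfl,
      hT.map_add (f := c a • g a) (hga.const_smul (c a)) hs hx, Pi.add_apply,
      hT.map_smul (c a) hga hx, ih (fun i hi => hg i (mem_insert_of_mem hi)) hx]
    rfl

theorem linComb {ι : Type*} (s : Finset ι) (c : ι → ℂ) {U : ι → (E → ℂ) → E → ℂ}
    (hU : ∀ i ∈ s, IsLocalLinearOn Y (U i)) :
    IsLocalLinearOn Y fun f x => ∑ i ∈ s, c i * U i f x where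
  contDiffOn hf := ContDiffOn.sum fun i hi => contDiffOn_const.mul ((hU i hi).contDiffOn hf)
  congr h x hx := sum_congr rfl fun i hi => by rw [(hU i hi).congr h hx]
  map_add hf hg x hx := by
    simp only [Pi.add_apply, ← sum_add_distrib, ← mul_add]
    exact sum_congr rfl fun i hi => by rw [(hU i hi).map_add hf hg hx, Pi.add_apply]
  map_smul c' _ hf x hx := by
    simp only [Pi.smul_apply, smul_eq_mul, mul_sum]
    exact sum_congr rfl fun i hi => by rw [(hU i hi).map_smul c' hf hx]; simp; ring

end IsLocalLinearOn

namespace CommOn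

variable {T U V : (E → ℂ) → E → ℂ}

theorem symm (h : CommOn Y T U) : CommOn Y U T := fun f hf => (h f hf).symm

theorem comp_right (hU : IsLocalLinearOn Y U) (hV : IsLocalLinearOn Y V) (hTU : CommOn Y T U)
    (hTV : CommOn Y T V) : CommOn Y T (U ∘ V) := fun f hf =>
  (hTU _ (hV.contDiffOn hf)).trans (hU.congr (hTV f hf))

theorem iterate_right (hU : IsLocalLinearOn Y U) (hTU : CommOn Y T U) (a : ℕ) :
    CommOn Y T U^[a] := by
  induction a with
  | zero => exact fun _ _ => eqOn_refl _ _
  | succ a ih => exact comp_right (hU.iterate a) hU ih hTU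

theorem monomialOp_right {ι : Type*} {U : ι → (E → ℂ) → E → ℂ}
    (hU : ∀ k, IsLocalLinearOn Y (U k)) (hTU : ∀ k, CommOn Y T (U k)) (L : List ι)
    (s : ι → ℕ) : CommOn Y T (monomialOp U L s) := by
  induction L with
  | nil => exact fun _ _ => eqOn_refl _ _
  | cons k L ih =>
    show CommOn Y T ((U k)^[s k] ∘ monomialOp U L s)
    exact comp_right ((hU k).iterate _) (.monomialOp hU L s) ((hTU k).iterate_right (hU k) _) ih

theorem linComb_right (hT : IsLocalLinearOn Y T) {ι : Type*} (s : Finset ι) (c : ι → ℂ)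
    {U : ι → (E → ℂ) → E → ℂ} (hU : ∀ i ∈ s, IsLocalLinearOn Y (U i))
    (hTU : ∀ i ∈ s, CommOn Y T (U i)) : CommOn Y T fun f x => ∑ i ∈ s, c i * U i f x :=
  fun f hf x hx => by
    rw [hT.map_linComb s c (fun i hi => (hU i hi).contDiffOn hf) hx]
    exact sum_congr rfl fun i hi => by rw [hTU i hi f hf hx]

end CommOn

section monomialOp

variable {ι : Type*} {T : ι → (E → ℂ) → E → ℂ}

theorem monomialOp_add_single [DecidableEq ι] (hT : ∀ k, IsLocalLinearOn Y (T k))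
    (hTT : ∀ i k, CommOn Y (T i) (T k)) {L : List ι} (hL : L.Nodup) {j : ι} (hj : j ∈ L)
    (s : ι → ℕ) {f : E → ℂ} (hf : ContDiffOn ℝ (⊤ : ℕ∞) f Y) :
    EqOn (monomialOp T L (s + Pi.single j 1) f) (T j (monomialOp T L s f)) Y := by
  induction L with
  | nil => simp at hj
  | cons i L ih =>
    obtain ⟨hiL, hL⟩ := List.nodup_cons.1 hL
    change EqOn ((T i)^[(s + Pi.single j 1 : ι → ℕ) i] (monomialOp T L (s + Pi.single j 1) f))
      (T j ((T i)^[s i] (monomialOp T L s f))) Y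
    by_cases hij : i = j
    · subst hij
      have hrest : monomialOp T L (s + Pi.single i 1) = monomialOp T L s :=
        monomialOp_congr fun k hk => by simp [Pi.single_eq_of_ne (ne_of_mem_of_not_mem hk hiL)]
      rw [hrest, Pi.add_apply, Pi.single_eq_same, Function.iterate_succ_apply']
      exact eqOn_refl _ _
    · rw [Pi.add_apply, Pi.single_eq_of_ne hij, add_zero]
      have hjL : j ∈ L := (List.mem_cons.1 hj).resolve_left (Ne.symm hij)
      exact (((hT i).iterate _).congr (ih hL hjL)).trans <|
        ((hTT j i).iterate_right (hT i) _).symm _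
          ((IsLocalLinearOn.monomialOp hT L s).contDiffOn hf)

end monomialOp

end Operators

section Euclidean

variable {n : ℕ} {Y : Set (EuclideanSpace ℝ (Fin n))}

theorem isLocalLinearOn_pd (hY : IsOpen Y) (i : Fin n) : IsLocalLinearOn Y (pd i) where
  contDiffOn hf := (hf.fderiv_of_isOpen hY le_rfl).clm_apply contDiffOn_const
  congr h x hx := by
    simp only [pd, (Filter.eventuallyEq_of_mem (hY.mem_nhds hx) h).fderiv_eq]
  map_add hf hg x hx := by
    have hf' := (hf.contDiffAt (hY.mem_nhds hx)).differentiableAt (by simp)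
    have hg' := (hg.contDiffAt (hY.mem_nhds hx)).differentiableAt (by simp)
    simp [pd, fderiv_add hf' hg']
  map_smul c f hf x hx := by
    have hf' := (hf.contDiffAt (hY.mem_nhds hx)).differentiableAt (by simp)
    simp [pd, fderiv_const_smul hf' c]

theorem commOn_pd_pd (hY : IsOpen Y) (i j : Fin n) : CommOn Y (pd i) (pd j) := by
  intro f hf x hx
  have hfx := hf.contDiffAt (hY.mem_nhds hx)
  have hdf : DifferentiableAt ℝ (fderiv ℝ f) x :=
    (hfx.fderiv_right (m := (⊤ : ℕ∞)) le_rfl).differentiableAt (by simp)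
  have hsnd (v w : EuclideanSpace ℝ (Fin n)) :
      fderiv ℝ (fun y => fderiv ℝ f y v) x w = fderiv ℝ (fderiv ℝ f) x w v := by
    simp [fderiv_clm_apply hdf (differentiableAt_const v)]
  have h2 : minSmoothness ℝ 2 ≤ ((⊤ : ℕ∞) : WithTop ℕ∞) := by
    simpa using WithTop.coe_le_coe.2 (le_top : (2 : ℕ∞) ≤ ⊤)
  change fderiv ℝ (fun y => fderiv ℝ f y (EuclideanSpace.single j 1)) x
      (EuclideanSpace.single i 1) =
    fderiv ℝ (fun y => fderiv ℝ f y (EuclideanSpace.single i 1)) x (EuclideanSpace.single j 1)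
  rw [hsnd, hsnd]
  exact hfx.isSymmSndFDerivAt h2 _ _

theorem isLocalLinearOn_pdPow (hY : IsOpen Y) (α : Fin n → ℕ) : IsLocalLinearOn Y (pdPow α) :=
  .monomialOp (isLocalLinearOn_pd hY) _ α

theorem isLocalLinearOn_PD (hY : IsOpen Y) (P : MvPolynomial (Fin n) ℂ) :
    IsLocalLinearOn Y (PD P) :=
  .linComb P.support _ fun α _ => isLocalLinearOn_pdPow hY α

theorem commOn_pd_PD (hY : IsOpen Y) (i : Fin n) (P : MvPolynomial (Fin n) ℂ) :
    CommOn Y (pd i) (PD P) :=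
  .linComb_right (isLocalLinearOn_pd hY i) P.support _ (fun α _ => isLocalLinearOn_pdPow hY α)
    fun _ _ => .monomialOp_right (isLocalLinearOn_pd hY) (commOn_pd_pd hY i) _ _

theorem commOn_PD_PD (hY : IsOpen Y) (P R : MvPolynomial (Fin n) ℂ) : CommOn Y (PD P) (PD R) :=
  .linComb_right (isLocalLinearOn_PD hY P) R.support _ (fun α _ => isLocalLinearOn_pdPow hY α)
    fun _ _ => .monomialOp_right (isLocalLinearOn_pd hY) (fun k => (commOn_pd_PD hY k P).symm) _ _

end Euclidean

section CC

variable {n m : ℕ} {Q : ℕ → MvPolynomial (Fin n) ℂ} {f : EuclideanSpace ℝ (Fin n) → ℂ}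

theorem CC_pred (hm : 1 ≤ m) : CC m Q (m - 1) f = f := by
  rw [CC, if_neg (by omega), if_pos (by omega)]

theorem CC_of_lt {l : ℕ} (hl : l + 1 < m) : CC m Q l f = 0 := by
  rw [CC, if_pos hl]

theorem CC_step (hm : 1 ≤ m) {l : ℕ} (hl : 0 < l) :
    CC m Q (m - 1 + l) f =
      -∑ j : Fin m, PD (Q (m - (j.1 + 1))) (CC m Q (m - 1 + l - (j.1 + 1)) f) := by
  rw [CC, if_neg (by omega), if_neg (by omega)]
  congr 1
  refine Fintype.sum_equiv Fin.revPerm _ _ fun k => ?_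
  have hk := k.2
  rw [Fin.revPerm_apply, Fin.val_rev, show m - (m - (k.1 + 1) + 1) = k.1 by omega,
    show m - 1 + l - (m - (k.1 + 1) + 1) = k.1 + (m - 1 + l) - m by omega]

/-- `Q_{m-k}(D)` for `k = 1, …, m`, indexed from `0`. -/
def ccFactor (m : ℕ) (Q : ℕ → MvPolynomial (Fin n) ℂ) (k : Fin m) :
    (EuclideanSpace ℝ (Fin n) → ℂ) → EuclideanSpace ℝ (Fin n) → ℂ :=
  PD (Q (m - (k.1 + 1)))

def ccFormula (m : ℕ) (Q : ℕ → MvPolynomial (Fin n) ℂ) (l : ℕ)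
    (f : EuclideanSpace ℝ (Fin n) → ℂ) : EuclideanSpace ℝ (Fin n) → ℂ :=
  fun x => ∑ s ∈ partitionMultiplicities m l,
    (signedMultinomial s : ℂ) * monomialOp (ccFactor m Q) (List.finRange m) s f x

theorem ccFormula_zero : ccFormula m Q 0 f = f := by
  funext x
  simp [ccFormula, partitionMultiplicities_zero, signedMultinomial, Nat.multinomial,
    monomialOp_zero]

theorem ccFormula_eq_neg_sum {l : ℕ} (hl : 0 < l) :
    ccFormula m Q l f = fun x => -∑ j : Fin m, ∑ s ∈ partitionMultiplicities m l with 0 < s j,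
      (signedMultinomial (s - Pi.single j 1) : ℂ) *
        monomialOp (ccFactor m Q) (List.finRange m) s f x := by
  funext x
  rw [sum_sum_signedMultinomial_sub_single _ hl, neg_neg]
  rfl

theorem PD_ccFormula {Y : Set (EuclideanSpace ℝ (Fin n))} (hY : IsOpen Y)
    (hf : ContDiffOn ℝ (⊤ : ℕ∞) f Y) {l : ℕ} {j : Fin m} (hj : j.1 + 1 ≤ l) :
    EqOn (PD (Q (m - (j.1 + 1))) (ccFormula m Q (l - (j.1 + 1)) f))
      (fun x => ∑ s ∈ partitionMultiplicities m l with 0 < s j,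
        (signedMultinomial (s - Pi.single j 1) : ℂ) *
          monomialOp (ccFactor m Q) (List.finRange m) s f x) Y := by
  have hT (k : Fin m) : IsLocalLinearOn Y (ccFactor m Q k) := isLocalLinearOn_PD hY _
  refine ((hT j).map_linComb _ _ fun s _ =>
    (IsLocalLinearOn.monomialOp hT _ s).contDiffOn hf).trans fun x hx => ?_
  rw [← sum_partitionMultiplicities_add_single _ hj]
  refine sum_congr rfl fun t _ => ?_
  rw [add_tsub_cancel_right, monomialOp_add_single hT (fun _ _ => commOn_PD_PD hY _ _)
    (List.nodup_finRange m) (List.mem_finRange j) t hf hx]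

theorem CC_eqOn_ccFormula (hm : 1 ≤ m) {Y : Set (EuclideanSpace ℝ (Fin n))} (hY : IsOpen Y)
    (hf : ContDiffOn ℝ (⊤ : ℕ∞) f Y) (l : ℕ) :
    EqOn (CC m Q (m - 1 + l) f) (ccFormula m Q l f) Y := by
  induction l using Nat.strong_induction_on with
  | _ l ih =>
  rcases l.eq_zero_or_pos with rfl | hl
  · rw [add_zero, CC_pred hm, ccFormula_zero]
    exact eqOn_refl _ _
  intro x hx
  rw [CC_step hm hl, ccFormula_eq_neg_sum hl]
  simp only [Pi.neg_apply, Finset.sum_apply]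
  congr 1
  refine sum_congr rfl fun j _ => ?_
  by_cases hj : j.1 + 1 ≤ l
  · rw [show m - 1 + l - (j.1 + 1) = m - 1 + (l - (j.1 + 1)) by omega,
      (isLocalLinearOn_PD hY _).congr (ih _ (by omega)) hx]
    exact PD_ccFormula hY hf hj hx
  · rw [CC_of_lt (by omega), (isLocalLinearOn_PD hY _).map_zero hx, Pi.zero_apply]
    refine (sum_eq_zero fun s hs => absurd ?_ hj).symm
    exact succ_le_of_mem_partitionMultiplicities (mem_filter.1 hs).1 (mem_filter.1 hs).2

end CC

theorem cc_explicit_formula_general {n : ℕ} (m : ℕ) (hm : 1 ≤ m)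
    (Q : ℕ → MvPolynomial (Fin n) ℂ)
    (Y : Set (EuclideanSpace ℝ (Fin n))) (hY : IsOpen Y)
    (l : ℕ) (f : EuclideanSpace ℝ (Fin n) → ℂ) (hf : ContDiffOn ℝ (⊤ : ℕ∞) f Y) :
    ∀ x ∈ Y,
      CC m Q (m-1+l) f x =
      ∑ s ∈ (Fintype.piFinset fun _ : Fin m => Finset.range (l+1)).filter
          (fun s => ∑ j : Fin m, (j.1+1) * s j = l),
        ((-1 : ℂ) ^ (∑ j, s j) * (Nat.multinomial Finset.univ s : ℂ)) *
          ((((List.finRange m).map fun k => (PD (Q (m - (k.1+1))))^[s k]).foldr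
            (· ∘ ·) id f) x) := by
  intro x hx
  rw [CC_eqOn_ccFormula hm hY hf l hx]
  simp only [ccFormula, signedMultinomial]
  push_cast
  rfl

/-- **Proposition 4.5.** Explicit formula for the recursively defined
operators: `𝒞_{m−1+l}(f) = Σ_{σ(s)=l} (−1)^{|s|} multinomial(s) ∏_{k=1}^m Q_{m−k}(D)^{s_k} f`
on `Y`, where `σ(s) = Σ_{j=1}^m j s_j`. -/
theorem cc_explicit_formula {n : ℕ} (hn : 1 ≤ n) (m : ℕ) (hm : 1 ≤ m)
    (Q : ℕ → MvPolynomial (Fin n) ℂ) (hQm : Q m = 1)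
    (Y : Set (EuclideanSpace ℝ (Fin n))) (hY : IsOpen Y)
    (l : ℕ) (f : EuclideanSpace ℝ (Fin n) → ℂ) (hf : ContDiffOn ℝ (⊤ : ℕ∞) f Y) :
    ∀ x ∈ Y,
      CC m Q (m-1+l) f x =
      ∑ s ∈ (Fintype.piFinset fun _ : Fin m => Finset.range (l+1)).filter
          (fun s => ∑ j : Fin m, (j.1+1) * s j = l),
        ((-1 : ℂ) ^ (∑ j, s j) * (Nat.multinomial Finset.univ s : ℂ)) *
          ((((List.finRange m).map fun k => (PD (Q (m - (k.1+1))))^[s k]).foldr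
            (· ∘ ·) id f) x) :=
  cc_explicit_formula_general m hm Q Y hY l f hf
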